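/- Fix a positive integer ρ, let P_ρ be the unique real polynomial with (1−x)·P_ρ(x) = x(1 − (1 − (1−x)²)^ρ) for all real x, and let x_ρ be the unique point of [0,1] with P_ρ′(x_ρ) = 0. Then x_ρ ∈ [1/2, 1) and P_ρ attains its maximum over [0,1] at x_ρ. -/

import Mathlib

/-!
With `u = 1 - (1 - x) ^ 2`, differentiating `(1 - x) P = x (1 - u ^ ρ)` and clearing `(1 - x) ^ 2`
gives `P' = ∑_{k<ρ} u ^ k - 2ρ x u ^ (ρ - 1)`, so on `(0, 1]` we have `P' = u ^ (ρ - 1) q` with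
`q x = ∑_{j<ρ} u⁻¹ ^ j - 2ρ x` strictly decreasing. As `P'(0) = 1` and `P'(1) = -ρ`, the stationary
point is the zero of `q` in `(0, 1)`, where `P` switches from increasing to decreasing; and
`q x ≥ ρ (1 - 2x)` forces that zero to lie in `[1/2, 1)`.
-/

open Polynomial Finset

lemma isMaxOn_of_deriv_nonneg_of_deriv_nonpos {f : ℝ → ℝ} {a b c : ℝ}
    (hf : ContinuousOn f (Set.Icc a b)) (hf' : DifferentiableOn ℝ f (Set.Ioo a b))
    (hc : c ∈ Set.Icc a b) (hleft : ∀ x ∈ Set.Ioo a c, 0 ≤ deriv f x)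
    (hright : ∀ x ∈ Set.Ioo c b, deriv f x ≤ 0) : IsMaxOn f (Set.Icc a b) c := by
  refine isMaxOn_iff.2 fun y hy => ?_
  rcases le_total y c with hyc | hcy
  · have hmono : MonotoneOn f (Set.Icc a c) :=
      monotoneOn_of_deriv_nonneg (convex_Icc a c) (hf.mono (Set.Icc_subset_Icc_right hc.2))
        (by simpa only [interior_Icc] using hf'.mono (Set.Ioo_subset_Ioo_right hc.2))
        (by rwa [interior_Icc])
    exact hmono ⟨hy.1, hyc⟩ ⟨hc.1, le_rfl⟩ hyc
  · have hanti : AntitoneOn f (Set.Icc c b) :=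
      antitoneOn_of_deriv_nonpos (convex_Icc c b) (hf.mono (Set.Icc_subset_Icc_left hc.1))
        (by simpa only [interior_Icc] using hf'.mono (Set.Ioo_subset_Ioo_left hc.1))
        (by rwa [interior_Icc])
    exact hanti ⟨le_rfl, hc.2⟩ ⟨hcy, hy.2⟩ hcy

lemma geom_sum_eq_pow_mul_geom_sum_inv {K : Type*} [DivisionSemiring K] {u : K} (hu : u ≠ 0)
    (m : ℕ) : ∑ k ∈ range (m + 1), u ^ k = u ^ m * ∑ j ∈ range (m + 1), u⁻¹ ^ j := by
  rw [mul_sum, ← sum_range_reflect]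
  refine sum_congr rfl fun j hj => ?_
  rw [inv_pow, ← pow_sub₀ u hu (by grind)]
  rfl

lemma eval_derivative_eq_geom_sum_sub {K : Type*} [Field K] [Infinite K] (m : ℕ) (P : K[X])
    (hP : ∀ x : K, (1 - x) * P.eval x = x * (1 - (1 - (1 - x) ^ 2) ^ (m + 1))) (x : K) :
    (derivative P).eval x =
      ∑ k ∈ range (m + 1), (1 - (1 - x) ^ 2) ^ k - 2 * (m + 1) * x * (1 - (1 - x) ^ 2) ^ m := by
  set U : K[X] := 1 - (1 - X) ^ 2
  have hPX : (1 - X) * P = X * (1 - U ^ (m + 1)) := Polynomial.funext fun x => by simp [U, hP x]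
  have hgeom : (1 - X) ^ 2 * ∑ k ∈ range (m + 1), U ^ k = 1 - U ^ (m + 1) := by
    rw [show (1 - X : K[X]) ^ 2 = 1 - U by ring, mul_neg_geom_sum]
  have hne : (1 - X : K[X]) ^ 2 ≠ 0 := pow_ne_zero 2 fun h => by simpa using congrArg (eval 0) h
  have hderiv : derivative P = ∑ k ∈ range (m + 1), U ^ k - 2 * (m + 1 : K[X]) * X * U ^ m := by
    refine mul_left_cancel₀ hne ?_
    have hd := congrArg derivative hPX
    simp only [derivative_mul, derivative_sub, derivative_pow, derivative_one, derivative_X, U,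
      Nat.add_sub_cancel, Nat.cast_add, Nat.cast_one, map_add, map_one, map_natCast]
      at hd
    simp only [U] at hPX hgeom ⊢
    linear_combination (1 - X) * hd + hPX - hgeom
  simp [hderiv, eval_finsetSum, U]

lemma one_sub_one_sub_sq_pos {x : ℝ} (hx : x ∈ Set.Ioc 0 1) : 0 < 1 - (1 - x) ^ 2 := by
  nlinarith [hx.1, hx.2]

/-- `P'(x) / u ^ (n - 1)` for `u = 1 - (1 - x) ^ 2`. -/
noncomputable def retryDerivQuotient (n : ℕ) (x : ℝ) : ℝ :=
  ∑ j ∈ range n, (1 - (1 - x) ^ 2)⁻¹ ^ j - 2 * n * x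

lemma strictAntiOn_retryDerivQuotient {n : ℕ} (hn : 0 < n) :
    StrictAntiOn (retryDerivQuotient n) (Set.Ioc 0 1) := by
  intro a ha b hb hab
  have hinv : (1 - (1 - b) ^ 2)⁻¹ ≤ (1 - (1 - a) ^ 2)⁻¹ :=
    inv_anti₀ (one_sub_one_sub_sq_pos ha) (by nlinarith [ha.2, hb.2])
  have hsum : ∑ j ∈ range n, (1 - (1 - b) ^ 2)⁻¹ ^ j ≤ ∑ j ∈ range n, (1 - (1 - a) ^ 2)⁻¹ ^ j :=
    sum_le_sum fun j _ => pow_le_pow_left₀ (inv_nonneg.2 (one_sub_one_sub_sq_pos hb).le) hinv j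
  have hn' : (0 : ℝ) < n := by exact_mod_cast hn
  unfold retryDerivQuotient
  nlinarith

lemma mul_one_sub_two_mul_le_retryDerivQuotient (n : ℕ) {x : ℝ} (hx : x ∈ Set.Ioc 0 1) :
    n * (1 - 2 * x) ≤ retryDerivQuotient n x := by
  have hinv : 1 ≤ (1 - (1 - x) ^ 2)⁻¹ :=
    (one_le_inv₀ (one_sub_one_sub_sq_pos hx)).2 (by nlinarith)
  have hsum : (n : ℝ) ≤ ∑ j ∈ range n, (1 - (1 - x) ^ 2)⁻¹ ^ j := by
    simpa using card_nsmul_le_sum (range n) _ 1 fun j _ => one_le_pow₀ hinv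
  unfold retryDerivQuotient
  linarith

lemma eval_derivative_eq_pow_mul_retryDerivQuotient (m : ℕ) (P : ℝ[X])
    (hP : ∀ x : ℝ, (1 - x) * P.eval x = x * (1 - (1 - (1 - x) ^ 2) ^ (m + 1))) {x : ℝ}
    (hx : x ∈ Set.Ioc 0 1) :
    (derivative P).eval x = (1 - (1 - x) ^ 2) ^ m * retryDerivQuotient (m + 1) x := by
  rw [eval_derivative_eq_geom_sum_sub m P hP,
    geom_sum_eq_pow_mul_geom_sum_inv (one_sub_one_sub_sq_pos hx).ne', retryDerivQuotient]
  push_cast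
  ring

lemma isMaxOn_of_retryDerivQuotient_eq_zero (m : ℕ) (P : ℝ[X])
    (hP : ∀ x : ℝ, (1 - x) * P.eval x = x * (1 - (1 - (1 - x) ^ 2) ^ (m + 1))) {c : ℝ}
    (hc : c ∈ Set.Ioc 0 1) (hq : retryDerivQuotient (m + 1) c = 0) :
    IsMaxOn P.eval (Set.Icc 0 1) c := by
  refine isMaxOn_of_deriv_nonneg_of_deriv_nonpos P.continuousOn P.differentiableOn
    ⟨hc.1.le, hc.2⟩ (fun x hx => ?_) (fun x hx => ?_)
  · have hx' : x ∈ Set.Ioc 0 1 := ⟨hx.1, hx.2.le.trans hc.2⟩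
    rw [Polynomial.deriv, eval_derivative_eq_pow_mul_retryDerivQuotient m P hP hx']
    exact mul_nonneg (pow_nonneg (one_sub_one_sub_sq_pos hx').le m)
      (hq ▸ (strictAntiOn_retryDerivQuotient m.succ_pos hx' hc hx.2).le)
  · have hx' : x ∈ Set.Ioc 0 1 := ⟨hc.1.trans hx.1, hx.2.le⟩
    rw [Polynomial.deriv, eval_derivative_eq_pow_mul_retryDerivQuotient m P hP hx']
    exact mul_nonpos_of_nonneg_of_nonpos (pow_nonneg (one_sub_one_sub_sq_pos hx').le m)
      (hq ▸ (strictAntiOn_retryDerivQuotient m.succ_pos hc hx' hx.1).le)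

theorem retry_rate_stationary_point_location (ρ : ℕ) (hρ : 1 ≤ ρ)
    (P : Polynomial ℝ)
    (hP : ∀ x : ℝ, (1 - x) * P.eval x = x * (1 - (1 - (1 - x) ^ 2) ^ ρ))
    (xρ : ℝ) (hxρ : xρ ∈ Set.Icc (0:ℝ) 1)
    (hstat : (Polynomial.derivative P).eval xρ = 0) :
    xρ ∈ Set.Ico (1/2 : ℝ) 1 ∧ ∀ y ∈ Set.Icc (0:ℝ) 1, P.eval y ≤ P.eval xρ := by
  obtain ⟨m, rfl⟩ : ∃ m, ρ = m + 1 := ⟨ρ - 1, by omega⟩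
  have hx0 : xρ ≠ 0 := by
    rintro rfl
    -- `P'(0) = 1`
    simp [eval_derivative_eq_geom_sum_sub m P hP] at hstat
  have hx1 : xρ ≠ 1 := by
    rintro rfl
    -- `P'(1) = -(m + 1)`
    simp [eval_derivative_eq_geom_sum_sub m P hP] at hstat
    linarith
  have hxρ' : xρ ∈ Set.Ioc 0 1 := ⟨hxρ.1.lt_of_ne' hx0, hxρ.2⟩
  have hq : retryDerivQuotient (m + 1) xρ = 0 := by
    rw [eval_derivative_eq_pow_mul_retryDerivQuotient m P hP hxρ'] at hstat
    exact (mul_eq_zero.1 hstat).resolve_left (pow_ne_zero _ (one_sub_one_sub_sq_pos hxρ').ne')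
  have hhalf : 1 / 2 ≤ xρ := by
    have hlower := mul_one_sub_two_mul_le_retryDerivQuotient (m + 1) hxρ'
    push_cast at hlower
    nlinarith
  exact ⟨⟨hhalf, hxρ.2.lt_of_ne hx1⟩,
    isMaxOn_iff.1 (isMaxOn_of_retryDerivQuotient_eq_zero m P hP hxρ' hq)⟩
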